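/- Let d₁, d₂ ∈ ℕ, set d = d₁ + d₂, and let z ∈ ℂ with Re z > 0. Then for all x₁, y₁ ∈ ℝ^{d₁} with x₁ ≠ 0 and y₁ ≠ 0 and all x₂ ∈ ℝ^{d₂}, one has |G^d_z(x₁, x₂) − G^d_z(y₁, x₂)| ≤ |G^d_{Re z}(x₁, 0) − G^d_{Re z}(y₁, 0)|. -/

import Mathlib

open MeasureTheory

/-- The Green's function `G^d_z` of `-Δ + z` on `ℝ^d`, for `Re z > 0`. -/
noncomputable def greenC (d : ℕ) (z : ℂ) (x : EuclideanSpace ℝ (Fin d)) : ℂ :=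
  ∫ t in Set.Ioi (0 : ℝ),
    (((4 * Real.pi * t) ^ (-(d : ℝ) / 2) : ℝ) : ℂ) *
      Complex.exp (-((‖x‖ ^ 2 / (4 * t) : ℝ) : ℂ) - z * (t : ℂ))

/-- The Green's function `G^d_λ` for real `λ > 0`. -/
noncomputable def greenR (d : ℕ) (z : ℝ) (x : EuclideanSpace ℝ (Fin d)) : ℝ :=
  ∫ t in Set.Ioi (0 : ℝ),
    (4 * Real.pi * t) ^ (-(d : ℝ) / 2) * Real.exp (-(‖x‖ ^ 2 / (4 * t)) - z * t)

/-- The point `(x₁, x₂)` of `ℝ^{d₁+d₂}` obtained by concatenating `x₁ ∈ ℝ^{d₁}` and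
`x₂ ∈ ℝ^{d₂}`. -/
noncomputable def epair {d₁ d₂ : ℕ} (x₁ : EuclideanSpace ℝ (Fin d₁))
    (x₂ : EuclideanSpace ℝ (Fin d₂)) : EuclideanSpace ℝ (Fin (d₁ + d₂)) :=
  (WithLp.equiv 2 (Fin (d₁ + d₂) → ℝ)).symm
    (Fin.append (WithLp.equiv 2 (Fin d₁ → ℝ) x₁) (WithLp.equiv 2 (Fin d₂ → ℝ) x₂))

namespace GreenAux

open Set Real

/-- The real integrand with weight parameter `c` (standing for a squared norm). -/
noncomputable def fR (d : ℕ) (l c : ℝ) (t : ℝ) : ℝ :=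
  (4 * Real.pi * t) ^ (-(d : ℝ) / 2) * Real.exp (-(c / (4 * t)) - l * t)

/-- The complex integrand with weight parameter `c`. -/
noncomputable def fC (d : ℕ) (z : ℂ) (c : ℝ) (t : ℝ) : ℂ :=
  (((4 * Real.pi * t) ^ (-(d : ℝ) / 2) : ℝ) : ℂ) *
    Complex.exp (-((c / (4 * t) : ℝ) : ℂ) - z * (t : ℂ))

lemma kernel_bound (d : ℕ) {a c t : ℝ} (ha : 0 < a) (hac : a ≤ c) (ht : 0 < t) :
    (4 * Real.pi * t) ^ (-(d : ℝ) / 2) * Real.exp (-(c / (4 * t)))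
      ≤ (4 * Real.pi) ^ (-(d : ℝ) / 2) * ((d.factorial : ℝ) * (4 / a) ^ d + 1) := by
  have hπ : (0:ℝ) < 4 * Real.pi := by positivity
  have hsplit : (4 * Real.pi * t) ^ (-(d : ℝ) / 2)
      = (4 * Real.pi) ^ (-(d : ℝ) / 2) * t ^ (-(d : ℝ) / 2) :=
    Real.mul_rpow hπ.le ht.le
  have hE : Real.exp (-(c / (4 * t))) ≤ Real.exp (-(a / (4 * t))) := by
    apply Real.exp_le_exp.2
    have : a / (4 * t) ≤ c / (4 * t) := by gcongr
    linarith
  have hKpos : (0:ℝ) < (4 * Real.pi) ^ (-(d : ℝ) / 2) := Real.rpow_pos_of_pos hπ _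
  have h4a : (0:ℝ) ≤ (d.factorial : ℝ) * (4 / a) ^ d :=
    mul_nonneg (Nat.cast_nonneg _) (pow_nonneg (div_nonneg (by norm_num) ha.le) d)
  have hfac : (1:ℝ) ≤ (d.factorial : ℝ) * (4 / a) ^ d + 1 := by linarith
  rcases le_total t 1 with ht1 | ht1
  · set u := a / (4 * t) with hu_def
    have hu : 0 < u := by positivity
    have h1 : u ^ d / (d.factorial : ℝ) ≤ Real.exp u := Real.pow_div_factorial_le_exp u hu.le d
    have h2 : Real.exp (-u) * u ^ d ≤ (d.factorial : ℝ) := by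
      rw [Real.exp_neg, inv_mul_le_iff₀ (Real.exp_pos u)]
      rw [div_le_iff₀ (by positivity : (0:ℝ) < (d.factorial : ℝ))] at h1
      linarith
    have h3 : Real.exp (-u) ≤ (d.factorial : ℝ) * (4 * t / a) ^ d := by
      have huinv : (4 * t / a : ℝ) = u⁻¹ := by
        rw [hu_def]; field_simp
      rw [huinv, inv_pow, ← div_eq_mul_inv, le_div_iff₀ (pow_pos hu d)]
      exact h2
    have htp : (0:ℝ) ≤ t ^ (-(d:ℝ)/2) := Real.rpow_nonneg ht.le _
    have hrd : t ^ (-(d:ℝ)/2) * t ^ (d:ℕ) ≤ 1 := by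
      rw [← Real.rpow_natCast t d, ← Real.rpow_add ht]
      have hd0 : (0:ℝ) ≤ (d:ℝ) := Nat.cast_nonneg d
      refine Real.rpow_le_one ht.le ht1 (by linarith)
    have key : t ^ (-(d:ℝ)/2) * Real.exp (-u) ≤ (d.factorial : ℝ) * (4 / a) ^ d := by
      calc t ^ (-(d:ℝ)/2) * Real.exp (-u)
          ≤ t ^ (-(d:ℝ)/2) * ((d.factorial : ℝ) * (4 * t / a) ^ d) := by
            exact mul_le_mul_of_nonneg_left h3 htp
        _ = (d.factorial : ℝ) * (4 / a) ^ d * (t ^ (-(d:ℝ)/2) * t ^ (d:ℕ)) := by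
            rw [show (4 * t / a : ℝ) = (4 / a) * t by ring, mul_pow]; ring
        _ ≤ (d.factorial : ℝ) * (4 / a) ^ d * 1 := by
            exact mul_le_mul_of_nonneg_left hrd h4a
        _ = (d.factorial : ℝ) * (4 / a) ^ d := mul_one _
    calc (4 * Real.pi * t) ^ (-(d : ℝ) / 2) * Real.exp (-(c / (4 * t)))
        ≤ (4 * Real.pi * t) ^ (-(d : ℝ) / 2) * Real.exp (-u) := by
          exact mul_le_mul_of_nonneg_left hE (Real.rpow_nonneg (by positivity) _)
      _ = (4 * Real.pi) ^ (-(d : ℝ) / 2) * (t ^ (-(d:ℝ)/2) * Real.exp (-u)) := by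
          rw [hsplit]; ring
      _ ≤ (4 * Real.pi) ^ (-(d : ℝ) / 2) * ((d.factorial : ℝ) * (4 / a) ^ d) := by
          exact mul_le_mul_of_nonneg_left key hKpos.le
      _ ≤ (4 * Real.pi) ^ (-(d : ℝ) / 2) * ((d.factorial : ℝ) * (4 / a) ^ d + 1) := by
          nlinarith
  · have hexp1 : Real.exp (-(c / (4 * t))) ≤ 1 := by
      rw [Real.exp_le_one_iff]
      have : 0 ≤ c / (4 * t) := div_nonneg (ha.le.trans hac) (by positivity)
      linarith
    have hd0 : (0:ℝ) ≤ (d:ℝ) := Nat.cast_nonneg d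
    have htp : t ^ (-(d:ℝ)/2) ≤ 1 :=
      Real.rpow_le_one_of_one_le_of_nonpos ht1 (by linarith)
    calc (4 * Real.pi * t) ^ (-(d : ℝ) / 2) * Real.exp (-(c / (4 * t)))
        ≤ (4 * Real.pi) ^ (-(d : ℝ) / 2) * t ^ (-(d:ℝ)/2) * 1 := by
          rw [hsplit]
          exact mul_le_mul_of_nonneg_left hexp1 (mul_nonneg hKpos.le (Real.rpow_nonneg ht.le _))
      _ ≤ (4 * Real.pi) ^ (-(d : ℝ) / 2) * 1 * 1 := by
          gcongr
      _ ≤ (4 * Real.pi) ^ (-(d : ℝ) / 2) * ((d.factorial : ℝ) * (4 / a) ^ d + 1) := by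
          nlinarith

lemma fR_nonneg (d : ℕ) (l c : ℝ) {t : ℝ} (ht : 0 < t) : 0 ≤ fR d l c t :=
  mul_nonneg (Real.rpow_nonneg (by positivity) _) (Real.exp_pos _).le

lemma contOn_fR (d : ℕ) (l c : ℝ) : ContinuousOn (fR d l c) (Ioi 0) := by
  apply ContinuousOn.mul
  · apply ContinuousOn.rpow_const (by fun_prop)
    intro t ht
    exact Or.inl (by have := Real.pi_pos; have : (0:ℝ) < t := ht; positivity)
  · apply Real.continuous_exp.comp_continuousOn
    apply ContinuousOn.sub _ (by fun_prop)
    apply ContinuousOn.neg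
    exact continuousOn_const.div (by fun_prop) fun t ht =>
      by have : (0:ℝ) < t := ht; positivity

lemma intR (d : ℕ) {l a c : ℝ} (hl : 0 < l) (ha : 0 < a) (hac : a ≤ c) :
    IntegrableOn (fR d l c) (Ioi 0) := by
  set M : ℝ := (4 * Real.pi) ^ (-(d : ℝ) / 2) * ((d.factorial : ℝ) * (4 / a) ^ d + 1)
  apply Integrable.mono' (((exp_neg_integrableOn_Ioi 0 hl)).const_mul M)
  · exact (contOn_fR d l c).aestronglyMeasurable measurableSet_Ioi
  · filter_upwards [ae_restrict_mem measurableSet_Ioi] with t ht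
    have ht' : (0:ℝ) < t := ht
    rw [Real.norm_eq_abs, abs_of_nonneg (fR_nonneg d l c ht')]
    show _ ≤ M * _
    unfold fR
    rw [show -(c / (4 * t)) - l * t = -(c/(4*t)) + -(l*t) by ring, Real.exp_add, ← mul_assoc]
    rw [show -l * t = -(l*t) by ring]
    exact mul_le_mul_of_nonneg_right (kernel_bound d ha hac ht') (Real.exp_pos _).le

lemma norm_fC (d : ℕ) (z : ℂ) (c : ℝ) {t : ℝ} (ht : 0 < t) :
    ‖fC d z c t‖ = fR d z.re c t := by
  unfold fC fR
  set r : ℝ := c / (4 * t) with hr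
  rw [norm_mul, Complex.norm_real, Real.norm_eq_abs,
    Complex.norm_exp, abs_of_nonneg (Real.rpow_nonneg (by positivity) _)]
  congr 1
  simp [Complex.sub_re, Complex.neg_re, Complex.ofReal_re, Complex.mul_re,
    Complex.ofReal_im]

lemma contOn_fC (d : ℕ) (z : ℂ) (c : ℝ) : ContinuousOn (fC d z c) (Ioi 0) := by
  apply ContinuousOn.mul
  · apply Complex.continuous_ofReal.comp_continuousOn
    apply ContinuousOn.rpow_const (by fun_prop)
    intro t ht
    exact Or.inl (by have := Real.pi_pos; have : (0:ℝ) < t := ht; positivity)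
  · apply Complex.continuous_exp.comp_continuousOn
    apply ContinuousOn.sub _ (by fun_prop)
    apply ContinuousOn.neg
    apply Complex.continuous_ofReal.comp_continuousOn
    exact continuousOn_const.div (by fun_prop) fun t ht =>
      by have : (0:ℝ) < t := ht; positivity

lemma intC (d : ℕ) {z : ℂ} {a c : ℝ} (hz : 0 < z.re) (ha : 0 < a) (hac : a ≤ c) :
    IntegrableOn (fC d z c) (Ioi 0) := by
  apply Integrable.mono' (intR d hz ha hac)
  · exact (contOn_fC d z c).aestronglyMeasurable measurableSet_Ioi
  · filter_upwards [ae_restrict_mem measurableSet_Ioi] with t ht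
    exact le_of_eq (norm_fC d z c ht)

lemma pointwise (d : ℕ) (z : ℂ) {a b s t : ℝ} (hab : a ≤ b) (hs : 0 ≤ s) (ht : 0 < t) :
    ‖fC d z (a + s) t - fC d z (b + s) t‖ ≤ fR d z.re a t - fR d z.re b t := by
  set K : ℝ := (4 * Real.pi * t) ^ (-(d : ℝ) / 2) with hK
  have hK0 : 0 ≤ K := Real.rpow_nonneg (by positivity) _
  have hfc : ∀ c : ℝ, fC d z c t
      = ((K * Real.exp (-(c / (4 * t))) : ℝ) : ℂ) * Complex.exp (-(z * t)) := by
    intro c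
    unfold fC
    rw [show -((c / (4 * t) : ℝ) : ℂ) - z * t = ((-(c / (4 * t)) : ℝ) : ℂ) + -(z * t) by
      push_cast; ring, Complex.exp_add, ← Complex.ofReal_exp]
    push_cast
    ring
  have hsub : fC d z (a + s) t - fC d z (b + s) t
      = ((K * (Real.exp (-((a + s) / (4 * t))) - Real.exp (-((b + s) / (4 * t))) ) : ℝ) : ℂ)
        * Complex.exp (-(z * t)) := by
    rw [hfc, hfc]; push_cast; ring
  have hAB : Real.exp (-((b + s) / (4 * t))) ≤ Real.exp (-((a + s) / (4 * t))) := by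
    apply Real.exp_le_exp.2
    have : (a + s) / (4 * t) ≤ (b + s) / (4 * t) := by gcongr
    linarith
  have hnormexp : ‖Complex.exp (-(z * t))‖ = Real.exp (-(z.re * t)) := by
    rw [Complex.norm_exp]
    congr 1
    simp [Complex.mul_re]
  rw [hsub, norm_mul, hnormexp, Complex.norm_real, Real.norm_eq_abs,
    abs_of_nonneg (mul_nonneg hK0 (by linarith))]
  have hsplit : ∀ c : ℝ, Real.exp (-((c + s) / (4 * t)))
      = Real.exp (-(c / (4 * t))) * Real.exp (-(s / (4 * t))) := by
    intro c
    rw [← Real.exp_add]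
    congr 1
    field_simp
    ring
  have hfr : ∀ c : ℝ, fR d z.re c t = K * Real.exp (-(c / (4 * t))) * Real.exp (-(z.re * t)) := by
    intro c
    unfold fR
    rw [show -(c / (4 * t)) - z.re * t = -(c / (4 * t)) + -(z.re * t) by ring, Real.exp_add]
    ring
  rw [hfr, hfr, hsplit, hsplit]
  set A := Real.exp (-(a / (4 * t)))
  set B := Real.exp (-(b / (4 * t)))
  set S := Real.exp (-(s / (4 * t)))
  set L := Real.exp (-(z.re * t))
  have hS1 : S ≤ 1 := Real.exp_le_one_iff.2
    (by have : 0 ≤ s / (4 * t) := div_nonneg hs (by positivity); linarith)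
  have hBA : B ≤ A := by
    apply Real.exp_le_exp.2
    have : a / (4 * t) ≤ b / (4 * t) := by gcongr
    linarith
  have hL : 0 ≤ L := (Real.exp_pos _).le
  have hS : 0 ≤ S := (Real.exp_pos _).le
  nlinarith [mul_nonneg (mul_nonneg hK0 hL) (sub_nonneg.2 hBA),
    mul_nonneg (mul_nonneg (mul_nonneg hK0 hL) (sub_nonneg.2 hBA)) (sub_nonneg.2 hS1)]

lemma main (d : ℕ) {z : ℂ} (hz : 0 < z.re) {a b s : ℝ} (ha : 0 < a) (hab : a ≤ b)
    (hs : 0 ≤ s) :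
    ‖(∫ t in Ioi (0:ℝ), fC d z (a + s) t) - ∫ t in Ioi (0:ℝ), fC d z (b + s) t‖
      ≤ (∫ t in Ioi (0:ℝ), fR d z.re a t) - ∫ t in Ioi (0:ℝ), fR d z.re b t := by
  have hb := ha.trans_le hab
  have iCa : IntegrableOn (fC d z (a + s)) (Ioi 0) := intC d hz ha (by linarith)
  have iCb : IntegrableOn (fC d z (b + s)) (Ioi 0) := intC d hz hb (by linarith)
  have iRa : IntegrableOn (fR d z.re a) (Ioi 0) := intR d hz ha le_rfl
  have iRb : IntegrableOn (fR d z.re b) (Ioi 0) := intR d hz hb le_rfl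
  rw [← integral_sub iCa iCb, ← integral_sub iRa iRb]
  refine le_trans (norm_integral_le_integral_norm _) ?_
  refine setIntegral_mono_on ((iCa.sub iCb).norm) (iRa.sub iRb) measurableSet_Ioi ?_
  intro t ht
  exact pointwise d z hab hs ht

end GreenAux

lemma norm_epair_sq {d₁ d₂ : ℕ} (x₁ : EuclideanSpace ℝ (Fin d₁))
    (x₂ : EuclideanSpace ℝ (Fin d₂)) : ‖epair x₁ x₂‖ ^ 2 = ‖x₁‖ ^ 2 + ‖x₂‖ ^ 2 := by
  rw [EuclideanSpace.norm_eq, EuclideanSpace.norm_eq, EuclideanSpace.norm_eq,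
    Real.sq_sqrt (by positivity), Real.sq_sqrt (by positivity), Real.sq_sqrt (by positivity)]
  rw [Fin.sum_univ_add]
  congr 1 <;> (apply Finset.sum_congr rfl; intro i _) <;>
    simp [epair, WithLp.equiv_symm_apply, WithLp.equiv_apply,
      Fin.append_left, Fin.append_right]

lemma greenC_eq (d : ℕ) (z : ℂ) (x : EuclideanSpace ℝ (Fin d)) :
    greenC d z x = ∫ t in Set.Ioi (0:ℝ), GreenAux.fC d z (‖x‖ ^ 2) t := rfl

lemma greenR_eq (d : ℕ) (l : ℝ) (x : EuclideanSpace ℝ (Fin d)) :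
    greenR d l x = ∫ t in Set.Ioi (0:ℝ), GreenAux.fR d l (‖x‖ ^ 2) t := rfl

theorem greenC_diff_bound_partial (d₁ d₂ : ℕ) (hd₁ : 0 < d₁) (hd₂ : 0 < d₂)
    (z : ℂ) (hz : 0 < z.re) (x₁ y₁ : EuclideanSpace ℝ (Fin d₁))
    (hx₁ : x₁ ≠ 0) (hy₁ : y₁ ≠ 0) (x₂ : EuclideanSpace ℝ (Fin d₂)) :
    ‖greenC (d₁ + d₂) z (epair x₁ x₂) - greenC (d₁ + d₂) z (epair y₁ x₂)‖
      ≤ |greenR (d₁ + d₂) z.re (epair x₁ 0) - greenR (d₁ + d₂) z.re (epair y₁ 0)| := by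
  have ha : (0:ℝ) < ‖x₁‖ ^ 2 := pow_pos (norm_pos_iff.2 hx₁) 2
  have hb : (0:ℝ) < ‖y₁‖ ^ 2 := pow_pos (norm_pos_iff.2 hy₁) 2
  have hs : (0:ℝ) ≤ ‖x₂‖ ^ 2 := sq_nonneg _
  have hrwC : ∀ u : EuclideanSpace ℝ (Fin d₁),
      greenC (d₁ + d₂) z (epair u x₂)
        = ∫ t in Set.Ioi (0:ℝ), GreenAux.fC (d₁ + d₂) z (‖u‖ ^ 2 + ‖x₂‖ ^ 2) t := by
    intro u
    rw [greenC_eq, norm_epair_sq]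
  have hrwR : ∀ u : EuclideanSpace ℝ (Fin d₁),
      greenR (d₁ + d₂) z.re (epair u 0)
        = ∫ t in Set.Ioi (0:ℝ), GreenAux.fR (d₁ + d₂) z.re (‖u‖ ^ 2) t := by
    intro u
    rw [greenR_eq, norm_epair_sq]
    simp
  rcases le_total (‖x₁‖ ^ 2) (‖y₁‖ ^ 2) with hab | hab
  · rw [hrwC, hrwC, hrwR, hrwR]
    exact le_trans (GreenAux.main _ hz ha hab hs) (le_abs_self _)
  · rw [norm_sub_rev, abs_sub_comm, hrwC, hrwC, hrwR, hrwR]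
    exact le_trans (GreenAux.main _ hz hb hab hs) (le_abs_self _)
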